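/- arXiv:2312.16087 — 2 statements merged into one kernel-verified Lean document; each statement's English description precedes it below -/
import Mathlib

section
/- Let G be a (c,d,α,δ)-bipartite expander and F ⊆ L with |F| ≤ αn. Let t = ⌊1/δ⌋ and suppose d₀ > 3/δ − 1 + 2ε₀ for some ε₀ > 0 with ⌊1/δ + ε₀⌋ = ⌊1/δ⌋. Let A = N_{≤t}(F) and B ⊆ N_{≥d₀−t}(F). Then |A| − |B| ≥ ε₀δ²c|F|. -/
open Finset
open scoped Classical

/-! Write `deg u = |N(u) ∩ F|`, `m = |N(F)|`, `K = c|F| = ∑ deg`. Each vertex of `A` has degree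
`≥ 1`, each vertex of `B` degree `≥ d₀ - t`, and every other vertex of `N(F)` degree `≥ t + 1`;
summing gives `t(|A| - |B|) ≥ (t + 1)m - K + (d₀ - 3t - 1)|B|`, and expansion gives `m ≥ δK`.
Since `⌊1/δ + ε₀⌋ = t` we have `(t + 1)δ - 1 > ε₀δ ≥ tε₀δ²`, which settles the case `d₀ > 3t`.
The bound on `d₀` forces `d₀ ≥ 3t`; when `d₀ = 3t` the term `-|B|` is absorbed by `2t|B| ≤ K`
and the slack in `3tδ > 3 - δ + 2ε₀δ`. -/

theorem sum_card_filter_adj_eq_mul_card {L R : Type*} [Fintype R] (Adj : L → R → Prop) {c : ℕ}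
    (hleft : ∀ v, #{u | Adj v u} = c) (F : Finset L) :
    ∑ u, #{v ∈ F | Adj v u} = c * #F := by
  have := sum_card_bipartiteAbove_eq_sum_card_bipartiteBelow (s := F) (t := univ) (r := Adj)
  simp_all [bipartiteAbove, bipartiteBelow, mul_comm]

/-- Vertices of degree `0`, in `[1, t]`, in `B` and `≥ t + 1` are weighted `0`, `1`, `β` and
`t + 1` respectively, each at most its degree. -/
theorem weighted_card_degree_classes_le_sum {R : Type*} [Fintype R] (deg : R → ℕ) (t : ℕ)
    {β : ℝ} (htβ : (t : ℝ) < β) (B : Finset R) (hB : ∀ u ∈ B, β ≤ deg u) :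
    (t + 1) * #{u | 0 < deg u} - t * #{u | 1 ≤ deg u ∧ deg u ≤ t} + (β - t - 1) * #B
      ≤ ∑ u, (deg u : ℝ) := by
  rw [← filter_univ_mem B]
  simp only [card_filter, Nat.cast_sum, Nat.cast_ite, Nat.cast_one, Nat.cast_zero, mul_sum,
    ← sum_sub_distrib, ← sum_add_distrib]
  refine sum_le_sum fun u _ => ?_
  have hBu : u ∈ B → t < deg u := fun h => by exact_mod_cast htβ.trans_le (hB u h)
  rcases Nat.lt_or_ge t (deg u) with hlt | hle
  · have : ¬ deg u ≤ t := by omega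
    have : (t + 1 : ℝ) ≤ deg u := by exact_mod_cast hlt
    split_ifs <;> simp_all
  · have : u ∉ B := fun h => by have := hBu h; omega
    split_ifs <;> simp_all

theorem two_mul_sq_mul_sq_le_of_three_add_lt {t δ ε : ℝ} (ht : 1 ≤ t) (hδ : 0 < δ) (hε : 0 < ε)
    (htδ : t * δ ≤ 1) (h : 3 + 2 * ε * δ < (3 * t + 1) * δ) :
    2 * t ^ 2 * ε * δ ^ 2 ≤ 2 * t * ((t + 1) * δ - 1) - 1 := by
  have h1 : 0 ≤ (1 - t * δ) * ((3 * t + 1) * t * δ - 2 * t - 1) :=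
    mul_nonneg (by linarith) (by nlinarith [mul_pos hε hδ])
  have h2 : 0 ≤ t ^ 2 * δ * ((3 * t + 1) * δ - 3 - 2 * ε * δ) :=
    mul_nonneg (by positivity) (by linarith)
  linear_combination h1 + h2

theorem mul_sq_mul_le_sub_of_degree_count {a b m K δ ε : ℝ} {t d₀ : ℕ} (hδ : 0 < δ)
    (hε : 0 < ε) (ht : 1 ≤ t) (htδ : t * δ ≤ 1) (hfloor : 1 / δ + ε < t + 1)
    (hd₀ : 3 / δ - 1 + 2 * ε < d₀) (hb : 0 ≤ b) (hK : 0 ≤ K) (hm : δ * K ≤ m)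
    (hcount : (t + 1) * m - t * a + (d₀ - t - t - 1) * b ≤ K) (hbK : (d₀ - t) * b ≤ K) :
    ε * δ ^ 2 * K ≤ a - b := by
  have ht0 : (0 : ℝ) < t := by exact_mod_cast ht
  have hkey : ((t + 1) * δ - 1) * K + (d₀ - 3 * t - 1) * b ≤ t * (a - b) := by
    linarith [mul_le_mul_of_nonneg_left hm (by positivity : (0 : ℝ) ≤ t + 1)]
  have hd₀δ : 3 - δ + 2 * ε * δ < d₀ * δ := by
    calc 3 - δ + 2 * ε * δ = (3 / δ - 1 + 2 * ε) * δ := by field_simp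
      _ < d₀ * δ := by gcongr
  have h3t : 3 * t ≤ d₀ := by
    have : (3 * t : ℝ) < d₀ + 1 := by nlinarith
    exact_mod_cast Nat.lt_succ_iff.1 (by exact_mod_cast this)
  rw [← mul_le_mul_iff_right₀ ht0]
  rcases h3t.lt_or_eq with hlt | heq
  · have hd : (3 * t + 1 : ℝ) ≤ d₀ := by exact_mod_cast hlt
    have hεδ : 1 + ε * δ < (t + 1) * δ := by
      calc 1 + ε * δ = (1 / δ + ε) * δ := by field_simp
        _ < (t + 1) * δ := by gcongr
    calc t * (ε * δ ^ 2 * K) = (t * δ) * (ε * δ * K) := by ring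
      _ ≤ 1 * (ε * δ * K) := by gcongr
      _ ≤ ((t + 1) * δ - 1) * K := by rw [one_mul]; gcongr; linarith
      _ ≤ t * (a - b) := by linarith [mul_nonneg (by linarith : (0 : ℝ) ≤ d₀ - 3 * t - 1) hb]
  · have hd : (d₀ : ℝ) = 3 * t := by exact_mod_cast heq.symm
    rw [hd] at hkey hbK hd₀δ
    have hpoly := two_mul_sq_mul_sq_le_of_three_add_lt (t := (t : ℝ)) (by exact_mod_cast ht) hδ hε
      htδ (by linarith)
    nlinarith [mul_le_mul_of_nonneg_right hpoly hK, mul_le_mul_of_nonneg_left hkey ht0.le]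

theorem stmt_2_general {L R : Type*} [Fintype R]
    (Adj : L → R → Prop)
    (c n : ℕ) (α δ : ℝ) (hδ : 0 < δ) (hδ1 : δ ≤ 1)
    (hleft : ∀ v : L, (univ.filter (fun u : R => Adj v u)).card = c)
    (hexp : ∀ S : Finset L, (S.card : ℝ) ≤ α * n →
      δ * c * S.card ≤
        ((univ.filter (fun u : R => 0 < (S.filter (fun v => Adj v u)).card)).card : ℝ))
    (F : Finset L) (hF : (F.card : ℝ) ≤ α * n)
    (t : ℕ) (ht : t = ⌊1 / δ⌋₊)
    (ε₀ : ℝ) (hε₀ : 0 < ε₀) (hfloor : ⌊1 / δ + ε₀⌋₊ = ⌊1 / δ⌋₊)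
    (d₀ : ℕ) (hd₀ : (d₀ : ℝ) > 3 / δ - 1 + 2 * ε₀)
    (A : Finset R)
    (hA : A = univ.filter (fun u : R =>
      1 ≤ (F.filter (fun v => Adj v u)).card ∧ (F.filter (fun v => Adj v u)).card ≤ t))
    (B : Finset R)
    (hB : B ⊆ univ.filter (fun u : R =>
      (d₀ : ℝ) - t ≤ ((F.filter (fun v => Adj v u)).card : ℝ))) :
    ε₀ * δ ^ 2 * c * F.card ≤ (A.card : ℝ) - B.card := by
  subst hA
  set deg : R → ℕ := fun u => #{v ∈ F | Adj v u}
  have hsum : ∑ u, (deg u : ℝ) = c * #F := by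
    exact_mod_cast sum_card_filter_adj_eq_mul_card Adj hleft F
  have htδ : t * δ ≤ 1 := (le_div_iff₀ hδ).1 (ht ▸ Nat.floor_le (by positivity))
  have ht1 : 1 ≤ t := ht ▸ Nat.le_floor (by simpa using one_le_one_div hδ hδ1)
  have hfl : 1 / δ + ε₀ < t + 1 := by
    rw [ht, ← hfloor]
    exact Nat.lt_floor_add_one _
  have hβ : (t : ℝ) < d₀ - t := by
    have : (3 * t : ℝ) ≤ 3 / δ := by rw [le_div_iff₀ hδ]; linarith
    have : (1 : ℝ) ≤ t := by exact_mod_cast ht1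
    linarith
  have hBdeg : ∀ u ∈ B, (d₀ - t : ℝ) ≤ deg u := fun u hu => (mem_filter.1 (hB hu)).2
  have hcount := weighted_card_degree_classes_le_sum deg t hβ B hBdeg
  have hbK : (d₀ - t : ℝ) * #B ≤ ∑ u, (deg u : ℝ) :=
    calc (d₀ - t : ℝ) * #B ≤ ∑ u ∈ B, (deg u : ℝ) := by
          simpa [mul_comm] using card_nsmul_le_sum B _ _ hBdeg
      _ ≤ ∑ u, (deg u : ℝ) := sum_le_sum_of_subset_of_nonneg (subset_univ B) (by simp)
  rw [hsum] at hcount hbK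
  rw [mul_assoc _ (c : ℝ)]
  exact mul_sq_mul_le_sub_of_degree_count hδ hε₀ ht1 htδ hfl hd₀ (by positivity) (by positivity)
    (by rw [← mul_assoc]; exact hexp F hF) hcount hbK

/-- In a `(c,d,α,δ)`-bipartite expander, for `F` with `|F| ≤ αn`, `t = ⌊1/δ⌋`,
`d₀ > 3/δ - 1 + 2ε₀` with `⌊1/δ + ε₀⌋ = ⌊1/δ⌋`, `A = N_{≤t}(F)` and
`B ⊆ N_{≥ d₀-t}(F)`, one has `|A| - |B| ≥ ε₀δ²c|F|`. -/
theorem stmt_2 {L R : Type*} [Fintype L] [Fintype R] [DecidableEq L] [DecidableEq R]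
    (Adj : L → R → Prop)
    (c d n : ℕ) (α δ : ℝ) (hδ : 0 < δ) (hδ1 : δ ≤ 1)
    (hn : Fintype.card L = n)
    (hleft : ∀ v : L, (univ.filter (fun u : R => Adj v u)).card = c)
    (hright : ∀ u : R, (univ.filter (fun v : L => Adj v u)).card = d)
    (hexp : ∀ S : Finset L, (S.card : ℝ) ≤ α * n →
      δ * c * S.card ≤
        ((univ.filter (fun u : R => 0 < (S.filter (fun v => Adj v u)).card)).card : ℝ))
    (F : Finset L) (hF : (F.card : ℝ) ≤ α * n)
    (t : ℕ) (ht : t = ⌊1 / δ⌋₊)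
    (ε₀ : ℝ) (hε₀ : 0 < ε₀) (hfloor : ⌊1 / δ + ε₀⌋₊ = ⌊1 / δ⌋₊)
    (d₀ : ℕ) (hd₀ : (d₀ : ℝ) > 3 / δ - 1 + 2 * ε₀) (hd₀d : d₀ ≤ d)
    (A : Finset R)
    (hA : A = univ.filter (fun u : R =>
      1 ≤ (F.filter (fun v => Adj v u)).card ∧ (F.filter (fun v => Adj v u)).card ≤ t))
    (B : Finset R)
    (hB : B ⊆ univ.filter (fun u : R =>
      (d₀ : ℝ) - t ≤ ((F.filter (fun v => Adj v u)).card : ℝ))) :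
    ε₀ * δ ^ 2 * c * F.card ≤ (A.card : ℝ) - B.card :=
  stmt_2_general Adj c n α δ hδ hδ1 hleft hexp F hF t ht ε₀ hε₀ hfloor d₀ hd₀ A hA B hB
end

section
/- Let G be a (c,d,α,δ)-bipartite expander. If δd₀ > 1, then the Tanner code T(G,C₀), where C₀ is a linear code with minimum distance d₀, has minimum Hamming distance greater than αn. -/
open Finset
open scoped Classical

/-! Let `F` be the support of a nonzero codeword `x` and `N(F)` the set of constraints touching
`F`. Each constraint in `N(F)` sees a nonzero local codeword, hence meets `F` in at least `d₀`
positions; double counting the edges between `F` and `N(F)` gives `d₀ |N(F)| ≤ c |F|`. If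
`|F| ≤ αn`, expansion gives `δ c |F| ≤ |N(F)|`, so `δ d₀ ≤ 1`. -/

section TannerCode

variable {L R : Type*} [Fintype R] [DecidableEq L] {d : ℕ} {nb : R → Fin d → L}

lemma sum_card_filter_nb_mem_eq_mul_card (hinj : ∀ u, Function.Injective (nb u)) {c : ℕ}
    (hleft : ∀ v : L, #{u | ∃ i, nb u i = v} = c) (F : Finset L) :
    ∑ u, #{i | nb u i ∈ F} = c * #F := by
  have hrow (u : R) : #{i | nb u i ∈ F} = #(F.bipartiteAbove (fun u v => ∃ i, nb u i = v) u) := by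
    rw [← card_image_of_injective _ (hinj u)]
    congr 1
    ext v
    simp only [bipartiteAbove, mem_image, mem_filter, mem_univ, true_and]
    constructor
    · rintro ⟨i, hi, rfl⟩
      exact ⟨hi, i, rfl⟩
    · rintro ⟨hv, i, rfl⟩
      exact ⟨i, hv, rfl⟩
  simp_rw [hrow, sum_card_bipartiteAbove_eq_sum_card_bipartiteBelow]
  simp [bipartiteBelow, hleft, mul_comm]

lemma mul_card_nbhd_support_le [Fintype L] {M : Type*} [Zero M] [DecidableEq M]
    (hinj : ∀ u, Function.Injective (nb u)) {c : ℕ}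
    (hleft : ∀ v : L, #{u | ∃ i, nb u i = v} = c) {d₀ : ℕ} {x : L → M}
    (hlocal : ∀ u, (fun i => x (nb u i)) ≠ 0 → d₀ ≤ hammingNorm fun i => x (nb u i)) :
    d₀ * #{u | ∃ i, nb u i ∈ ({v | x v ≠ 0} : Finset L)} ≤ c * #{v | x v ≠ 0} := by
  set F : Finset L := {v | x v ≠ 0}
  have hmeet (u : R) : hammingNorm (fun i => x (nb u i)) = #{i | nb u i ∈ F} := by
    simp [hammingNorm, F]
  calc d₀ * #{u | ∃ i, nb u i ∈ F}
      = ∑ u ∈ {u | ∃ i, nb u i ∈ F}, d₀ := by rw [sum_const, smul_eq_mul, mul_comm]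
    _ ≤ ∑ u ∈ {u | ∃ i, nb u i ∈ F}, #{i | nb u i ∈ F} := by
        refine sum_le_sum fun u hu => hmeet u ▸ hlocal u ?_
        obtain ⟨i, hi⟩ := (mem_filter.1 hu).2
        exact fun h0 => (mem_filter.1 hi).2 (congrFun h0 i)
    _ ≤ ∑ u, #{i | nb u i ∈ F} := sum_le_sum_of_subset (subset_univ _)
    _ = c * #F := sum_card_filter_nb_mem_eq_mul_card hinj hleft F

end TannerCode

theorem stmt_9_general {L R : Type*} [Fintype L] [Fintype R] [DecidableEq L]
    (c d d₀ n : ℕ) (α δ : ℝ) (hc : 0 < c)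
    (hδd₀ : 1 < δ * d₀)
    (nb : R → Fin d → L) (hinj : ∀ u, Function.Injective (nb u))
    (hleft : ∀ v : L, (univ.filter (fun u : R => ∃ i, nb u i = v)).card = c)
    (hexp : ∀ S : Finset L, (S.card : ℝ) ≤ α * n →
      δ * c * S.card ≤ ((univ.filter (fun u : R => ∃ i, nb u i ∈ S)).card : ℝ))
    (C₀ : Submodule (ZMod 2) (Fin d → ZMod 2))
    (hdist : ∀ w ∈ C₀, w ≠ 0 → d₀ ≤ hammingNorm w) :
    ∀ x : L → ZMod 2, (∀ u : R, (fun i => x (nb u i)) ∈ C₀) → x ≠ 0 →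
      α * n < ((univ.filter (fun v : L => x v ≠ 0)).card : ℝ) := by
  intro x hx hx0
  by_contra! hsmall
  obtain ⟨v, hv⟩ := Function.ne_iff.mp hx0
  have hF : (0 : ℝ) < #{v | x v ≠ 0} := by exact_mod_cast card_pos.2 ⟨v, by simpa using hv⟩
  have hcount : (d₀ : ℝ) * #{u | ∃ i, nb u i ∈ ({v | x v ≠ 0} : Finset L)} ≤ c * #{v | x v ≠ 0} :=
    by exact_mod_cast mul_card_nbhd_support_le hinj hleft fun u hu => hdist _ (hx u) hu
  have hexpand := hexp _ hsmall
  have hc' : (0 : ℝ) < c := by exact_mod_cast hc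
  nlinarith [mul_pos hc' hF, mul_le_mul_of_nonneg_left hexpand (Nat.cast_nonneg d₀)]

/-- If `G` is a `(c,d,α,δ)`-bipartite expander and `δd₀ > 1`, then the Tanner code
`T(G,C₀)` for an inner linear code `C₀` of minimum distance `d₀` has minimum Hamming
distance greater than `αn`: every nonzero codeword has weight `> αn`. -/
theorem stmt_9 {L R : Type*} [Fintype L] [Fintype R] [DecidableEq L]
    (c d d₀ n : ℕ) (α δ : ℝ) (hδ : 0 < δ) (hδ1 : δ ≤ 1) (hc : 0 < c)
    (hd₀d : d₀ ≤ d) (hδd₀ : 1 < δ * d₀)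
    (hn : Fintype.card L = n)
    (nb : R → Fin d → L) (hinj : ∀ u, Function.Injective (nb u))
    (hleft : ∀ v : L, (univ.filter (fun u : R => ∃ i, nb u i = v)).card = c)
    (hexp : ∀ S : Finset L, (S.card : ℝ) ≤ α * n →
      δ * c * S.card ≤ ((univ.filter (fun u : R => ∃ i, nb u i ∈ S)).card : ℝ))
    (C₀ : Submodule (ZMod 2) (Fin d → ZMod 2))
    (hdist : ∀ w ∈ C₀, w ≠ 0 → d₀ ≤ hammingNorm w) :
    ∀ x : L → ZMod 2, (∀ u : R, (fun i => x (nb u i)) ∈ C₀) → x ≠ 0 →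
      α * n < ((univ.filter (fun v : L => x v ≠ 0)).card : ℝ) :=
  stmt_9_general c d d₀ n α δ hc hδd₀ nb hinj hleft hexp C₀ hdist
end
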